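/- Let H be an infinite-dimensional Hilbert space and (a_n) a sequence of positive reals with Σ_{n=1}^∞ a_n^{-2} = ∞. Then there exists a sequence (x_n) in H with ‖x_n‖ = a_n for all n such that 0 is a weak cluster point of (x_n). In fact, one can take x_n = a_n e_n for an orthonormal sequence (e_n). -/

import Mathlib

/-!
Take `x n = a n • e n` for an orthonormal sequence `e`, which exists by Gram–Schmidt. For every
functional `f`, Bessel's inequality gives `∑ ‖f (e n)‖² < ∞`. If finitely many functionals
`f₁, …, f_k` kept `x n` outside their `ε`-neighbourhood of `0` for all large `n`, then
`ε² / a n² ≤ ∑ᵢ ‖fᵢ (e n)‖²` eventually, so `∑ (a n²)⁻¹` would converge.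
-/

open Filter Topology

/-- `x₀` is a weak cluster point of the sequence `x`. -/
def IsWeakClusterPt (𝕜 : Type*) {X : Type*} [RCLike 𝕜] [NormedAddCommGroup X]
    [NormedSpace 𝕜 X] (x₀ : X) (x : ℕ → X) : Prop :=
  ∀ (k : ℕ) (f : Fin k → X →L[𝕜] 𝕜) (ε : ℝ), 0 < ε → ∀ N : ℕ,
    ∃ n ≥ N, ∀ i, ‖f i (x n) - f i x₀‖ < ε

theorem exists_orthonormal_nat_of_not_finiteDimensional {𝕜 E : Type*} [RCLike 𝕜]
    [NormedAddCommGroup E] [InnerProductSpace 𝕜 E] (h : ¬ FiniteDimensional 𝕜 E) :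
    ∃ e : ℕ → E, Orthonormal 𝕜 e := by
  let b := Module.Basis.ofVectorSpace 𝕜 E
  have : Infinite (Module.Basis.ofVectorSpaceIndex 𝕜 E) := by
    rw [← not_finite_iff_infinite]
    exact fun _ ↦ h (Module.Finite.of_basis b)
  let φ := Infinite.natEmbedding (Module.Basis.ofVectorSpaceIndex 𝕜 E)
  exact ⟨_, InnerProductSpace.gramSchmidtNormed_orthonormal
    (b.linearIndependent.comp φ φ.injective)⟩

theorem Orthonormal.summable_norm_apply_sq {𝕜 E ι : Type*} [RCLike 𝕜] [NormedAddCommGroup E]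
    [InnerProductSpace 𝕜 E] [CompleteSpace E] {e : ι → E} (he : Orthonormal 𝕜 e)
    (f : StrongDual 𝕜 E) : Summable fun i ↦ ‖f (e i)‖ ^ 2 := by
  convert he.inner_products_summable ((InnerProductSpace.toDual 𝕜 E).symm f) using 3 with i
  rw [norm_inner_symm, InnerProductSpace.toDual_symm_apply]

theorem isWeakClusterPt_zero_smul_of_summable_sq {𝕜 X : Type*} [RCLike 𝕜] [NormedAddCommGroup X]
    [NormedSpace 𝕜 X] {y : ℕ → X} (hy : ∀ f : StrongDual 𝕜 X, Summable fun n ↦ ‖f (y n)‖ ^ 2)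
    {a : ℕ → ℝ} (ha : ∀ n, 0 < a n) (hdiv : ¬ Summable fun n ↦ (a n ^ 2)⁻¹) :
    IsWeakClusterPt 𝕜 0 (fun n ↦ (a n : 𝕜) • y n) := by
  intro k f ε hε N
  by_contra! hfar
  refine hdiv ((summable_mul_left_iff (pow_ne_zero 2 hε.ne')).1 ?_)
  refine (summable_sum (s := .univ) fun i _ ↦ hy (f i)).of_norm_bounded_eventually_nat ?_
  filter_upwards [eventually_ge_atTop N] with n hn
  obtain ⟨i, hi⟩ := hfar n hn
  rw [map_zero, sub_zero, map_smul, norm_smul, RCLike.norm_ofReal, abs_of_pos (ha n)] at hi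
  calc ‖ε ^ 2 * (a n ^ 2)⁻¹‖ = (ε / a n) ^ 2 := by
        rw [Real.norm_of_nonneg (by positivity), div_pow, div_eq_mul_inv]
    _ ≤ ‖f i (y n)‖ ^ 2 :=
        pow_le_pow_left₀ (div_pos hε (ha n)).le ((div_le_iff₀' (ha n)).2 hi) 2
    _ ≤ ∑ j, ‖f j (y n)‖ ^ 2 :=
        Finset.single_le_sum (f := fun j ↦ ‖f j (y n)‖ ^ 2) (fun _ _ ↦ by positivity)
          (Finset.mem_univ i)

theorem stmt4 {𝕜 H : Type*} [RCLike 𝕜] [NormedAddCommGroup H] [InnerProductSpace 𝕜 H]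
    [CompleteSpace H] (hinf : ¬ FiniteDimensional 𝕜 H)
    (a : ℕ → ℝ) (ha : ∀ n, 0 < a n)
    (hdiv : ¬ Summable (fun n => (a n ^ 2)⁻¹)) :
    ∃ x : ℕ → H, (∀ n, ‖x n‖ = a n) ∧ IsWeakClusterPt 𝕜 0 x ∧
      ∃ e : ℕ → H, Orthonormal 𝕜 e ∧ ∀ n, x n = (a n : 𝕜) • e n := by
  obtain ⟨e, he⟩ := exists_orthonormal_nat_of_not_finiteDimensional hinf
  refine ⟨fun n ↦ (a n : 𝕜) • e n, fun n ↦ ?_,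
    isWeakClusterPt_zero_smul_of_summable_sq he.summable_norm_apply_sq ha hdiv, e, he,
    fun _ ↦ rfl⟩
  rw [norm_smul, he.norm_eq_one, mul_one, RCLike.norm_ofReal, abs_of_pos (ha n)]
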